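/- Assume each p_i takes values almost surely in the finite set A. Let α ∈ (0,1) and define the [A-DBH-SU] critical values by τ_m = max{t ∈ A : F_i(t) < 1 for all i, and (1/m)·Σ_{i=1}^m F_i(t)/(1−F_i(t)) ≤ α} and, for 1 ≤ k ≤ m−1, τ_k = max{t ∈ A : t ≤ τ_m and for every subset S ⊆ {1,…,m} with |S| = m−k+1, Σ_{i∈S} F_i(t)/(1−F_i(τ_m)) ≤ αk} (these sets contain 0, hence are nonempty, and the resulting sequence is nondecreasing). Then the false discovery rate of the step-up procedure SU(τ) satisfies FDR(SU(τ)) ≤ α. -/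

import Mathlib

open MeasureTheory ProbabilityTheory Finset

/-- Number of rejections of the step-up procedure with critical values `τ 1, …, τ m`
(convention `τ 0 = 0`): the largest `k ∈ {0, …, m}` such that at least `k` of the
p-values are `≤ τ k`. -/
noncomputable def numRejSU (m : ℕ) (τ : ℕ → ℝ) (q : Fin m → ℝ) : ℕ :=
  sSup {k | k ≤ m ∧ k ≤ (univ.filter (fun j => q j ≤ τ k)).card}

/-- Rejection set of the step-up procedure. -/
noncomputable def rejSU (m : ℕ) (τ : ℕ → ℝ) (q : Fin m → ℝ) : Finset (Fin m) :=
  univ.filter (fun i => q i ≤ τ (numRejSU m τ q))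

/-- False discovery proportion of a rejection set `R` w.r.t. the set of true nulls `H0`. -/
noncomputable def FDP (m : ℕ) (H0 R : Finset (Fin m)) : ℝ :=
  ((R ∩ H0).card : ℝ) / max (R.card : ℝ) 1

/-!
Let `κᵢ` be the number of rejections of the step-up procedure once `pᵢ` is replaced by `0`. On
`{pᵢ ≤ τ_K}` the procedure rejects exactly `κᵢ = K` hypotheses, so
`FDP ≤ ∑_{i ∈ H₀} 1{pᵢ ≤ τ_{κᵢ}} / κᵢ`. As `κᵢ` is independent of `pᵢ`, conditioning on `κᵢ = k`
and `P(pᵢ ≤ τ_k) ≤ Fᵢ(τ_k) ≤ P(pᵢ > τ_m) Fᵢ(τ_k) / (1 - Fᵢ(τ_m))` bound the expectation of each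
term by that of `1{pᵢ > τ_m} Fᵢ(τ_{κᵢ}) / ((1 - Fᵢ(τ_m)) κᵢ)`. On `{pᵢ > τ_m}` all the `κᵢ` equal
one `K` with `#{i | pᵢ > τ_m} + K ≤ m + 1`, and then the defining inequalities of the critical
values bound the sum of these terms by `α`.
-/

open Function

section StepUp

variable {m : ℕ} {τ : ℕ → ℝ}

lemma bddAbove_numRejSU_set (q : Fin m → ℝ) :
    BddAbove {k | k ≤ m ∧ k ≤ #{j | q j ≤ τ k}} :=
  ⟨m, fun _ hk => hk.1⟩

lemma numRejSU_le (q : Fin m → ℝ) : numRejSU m τ q ≤ m :=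
  (Nat.sSup_mem ⟨0, by simp⟩ (bddAbove_numRejSU_set q)).1

lemma numRejSU_le_card (q : Fin m → ℝ) : numRejSU m τ q ≤ #{j | q j ≤ τ (numRejSU m τ q)} :=
  (Nat.sSup_mem ⟨0, by simp⟩ (bddAbove_numRejSU_set q)).2

lemma le_numRejSU (q : Fin m → ℝ) {k : ℕ} (hk : k ≤ m) (hkq : k ≤ #{j | q j ≤ τ k}) :
    k ≤ numRejSU m τ q :=
  le_csSup (bddAbove_numRejSU_set q) ⟨hk, hkq⟩

lemma numRejSU_eq_findGreatest (q : Fin m → ℝ) :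
    numRejSU m τ q = Nat.findGreatest (fun k => k ≤ #{j | q j ≤ τ k}) m :=
  le_antisymm (Nat.le_findGreatest (numRejSU_le q) (numRejSU_le_card q))
    (le_numRejSU q (Nat.findGreatest_le m)
      (Nat.findGreatest_spec (P := fun k => k ≤ #{j | q j ≤ τ k}) (Nat.zero_le m) (Nat.zero_le _)))

lemma measurable_numRejSU : Measurable (numRejSU m τ) := by
  simp_rw [funext numRejSU_eq_findGreatest, card_filter]
  refine measurable_findGreatest fun k _ => measurableSet_le measurable_const ?_
  exact Finset.measurable_sum _ fun j _ =>
    (measurable_const.ite (measurableSet_le (measurable_pi_apply j) measurable_const)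
      measurable_const)

lemma card_filter_le_mono (hτ : MonotoneOn τ (Set.Iic m)) (q : Fin m → ℝ) {k l : ℕ}
    (hkl : k ≤ l) (hl : l ≤ m) : #{j | q j ≤ τ k} ≤ #{j | q j ≤ τ l} :=
  card_le_card <| monotone_filter_right _ fun _ _ h => h.trans (hτ (hkl.trans hl) hl hkl)

lemma card_rejSU (hτ : MonotoneOn τ (Set.Iic m)) (q : Fin m → ℝ) :
    #(rejSU m τ q) = numRejSU m τ q := by
  set K := numRejSU m τ q
  refine le_antisymm (not_lt.1 fun hK => ?_) (numRejSU_le_card q)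
  have hKm : K < m := hK.trans_le ((card_le_univ _).trans_eq (Fintype.card_fin m))
  have hK1 : K + 1 ≤ #{j | q j ≤ τ (K + 1)} :=
    hK.trans_le (card_filter_le_mono hτ q K.le_succ hKm)
  exact (le_numRejSU q hKm hK1).not_gt K.lt_succ_self

lemma filter_update_zero_le_eq_insert (hτ : MonotoneOn τ (Set.Iic m)) (hτ0 : 0 ≤ τ 0)
    (q : Fin m → ℝ) (i : Fin m) {k : ℕ} (hk : k ≤ m) :
    filter (fun j => update q i 0 j ≤ τ k) univ =
      insert i (filter (fun j => q j ≤ τ k) univ) := by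
  have h0 : (0 : ℝ) ≤ τ k := hτ0.trans (hτ (Set.mem_Iic.2 (Nat.zero_le m)) hk (Nat.zero_le k))
  ext j
  rcases eq_or_ne j i with rfl | hj
  · simp [h0]
  · simp [hj]

lemma notMem_filter_le_of_lt (hτ : MonotoneOn τ (Set.Iic m)) {q : Fin m → ℝ} {i : Fin m}
    (hi : τ m < q i) {k : ℕ} (hk : k ≤ m) : i ∉ filter (fun j => q j ≤ τ k) univ := by
  simpa using (hτ hk Set.self_mem_Iic hk).trans_lt hi

lemma numRejSU_update_zero_of_le (hτ : MonotoneOn τ (Set.Iic m)) (hτ0 : 0 ≤ τ 0)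
    (q : Fin m → ℝ) {i : Fin m} (hi : q i ≤ τ (numRejSU m τ q)) :
    numRejSU m τ (update q i 0) = numRejSU m τ q := by
  set K := numRejSU m τ q
  set K' := numRejSU m τ (update q i 0)
  have hKK' : K ≤ K' := by
    refine le_numRejSU _ (numRejSU_le q) ((numRejSU_le_card q).trans (card_le_card ?_))
    rw [filter_update_zero_le_eq_insert hτ hτ0 q i (numRejSU_le q)]
    exact subset_insert _ _
  have hi' : q i ≤ τ K' := hi.trans (hτ (numRejSU_le q) (numRejSU_le _) hKK')
  have hK' := numRejSU_le_card (τ := τ) (update q i 0)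
  rw [filter_update_zero_le_eq_insert hτ hτ0 q i (numRejSU_le _),
    insert_eq_of_mem (by simpa using hi')] at hK'
  exact le_antisymm (le_numRejSU q (numRejSU_le _) hK') hKK'

lemma one_le_numRejSU_update_zero (hτ : MonotoneOn τ (Set.Iic m)) (hτ0 : 0 ≤ τ 0)
    (q : Fin m → ℝ) (i : Fin m) : 1 ≤ numRejSU m τ (update q i 0) := by
  refine le_numRejSU _ i.pos ?_
  rw [filter_update_zero_le_eq_insert hτ hτ0 q i i.pos]
  exact card_pos.2 (insert_nonempty _ _)

lemma numRejSU_update_zero_eq_of_lt (hτ : MonotoneOn τ (Set.Iic m)) (hτ0 : 0 ≤ τ 0)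
    (q : Fin m → ℝ) {i j : Fin m} (hi : τ m < q i) (hj : τ m < q j) :
    numRejSU m τ (update q i 0) = numRejSU m τ (update q j 0) := by
  unfold numRejSU
  congr 1
  ext k
  refine and_congr_right fun hk => ?_
  rw [filter_update_zero_le_eq_insert hτ hτ0 q i hk, filter_update_zero_le_eq_insert hτ hτ0 q j hk,
    card_insert_of_notMem (notMem_filter_le_of_lt hτ hi hk),
    card_insert_of_notMem (notMem_filter_le_of_lt hτ hj hk)]

lemma card_add_numRejSU_update_zero_le (hτ : MonotoneOn τ (Set.Iic m)) (hτ0 : 0 ≤ τ 0)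
    (q : Fin m → ℝ) {i : Fin m} (hi : τ m < q i) :
    #{j | τ m < q j} + numRejSU m τ (update q i 0) ≤ m + 1 := by
  set K' := numRejSU m τ (update q i 0)
  have hK'm : K' ≤ m := numRejSU_le _
  have hK' := numRejSU_le_card (τ := τ) (update q i 0)
  rw [filter_update_zero_le_eq_insert hτ hτ0 q i hK'm,
    card_insert_of_notMem (notMem_filter_le_of_lt hτ hi hK'm)] at hK'
  have hsplit : #{j | q j ≤ τ m} + #{j | τ m < q j} = m := by
    simpa [not_le] using card_filter_add_card_filter_not (s := univ) (fun j => q j ≤ τ m)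
  have := card_filter_le_mono hτ q hK'm le_rfl
  omega

lemma FDP_nonneg (H0 R : Finset (Fin m)) : 0 ≤ FDP m H0 R :=
  div_nonneg (Nat.cast_nonneg _) (zero_le_one.trans (le_max_right _ _))

lemma FDP_rejSU_le_sum (hτ : MonotoneOn τ (Set.Iic m)) (hτ0 : 0 ≤ τ 0) (H0 : Finset (Fin m))
    (q : Fin m → ℝ) :
    FDP m H0 (rejSU m τ q) ≤ ∑ i ∈ H0,
      if q i ≤ τ (numRejSU m τ (update q i 0)) then (numRejSU m τ (update q i 0) : ℝ)⁻¹
      else 0 := by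
  rw [FDP, card_rejSU hτ, rejSU, filter_inter, univ_inter, card_filter, Nat.cast_sum, sum_div]
  refine sum_le_sum fun i _ => ?_
  by_cases hi : q i ≤ τ (numRejSU m τ q)
  · have hK := numRejSU_update_zero_of_le hτ hτ0 q hi
    have h1 : (1 : ℝ) ≤ numRejSU m τ q := by
      exact_mod_cast hK ▸ one_le_numRejSU_update_zero hτ hτ0 q i
    rw [hK, if_pos hi, if_pos hi, max_eq_left h1, Nat.cast_one, one_div]
  · rw [if_neg hi, Nat.cast_zero, zero_div]
    split_ifs <;> positivity

lemma sum_ite_lt_div_numRejSU_update_zero_le (hτ : MonotoneOn τ (Set.Iic m)) (hτ0 : 0 ≤ τ 0)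
    {c : Fin m → ℕ → ℝ} {α : ℝ} (hα : 0 ≤ α)
    (hc : ∀ k, 1 ≤ k → k ≤ m → ∀ N : Finset (Fin m), #N + k ≤ m + 1 → ∑ i ∈ N, c i k ≤ α * k)
    (H0 : Finset (Fin m)) (q : Fin m → ℝ) :
    ∑ i ∈ H0, (if τ m < q i then
      c i (numRejSU m τ (update q i 0)) / numRejSU m τ (update q i 0) else 0) ≤ α := by
  rw [← sum_filter]
  set N := H0.filter (fun i => τ m < q i)
  obtain hN | ⟨i₀, hi₀⟩ := N.eq_empty_or_nonempty
  · simpa [hN] using hα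
  have hi₀ : τ m < q i₀ := (mem_filter.1 hi₀).2
  set K := numRejSU m τ (update q i₀ 0)
  have hK1 : (1 : ℝ) ≤ K := by exact_mod_cast one_le_numRejSU_update_zero hτ hτ0 q i₀
  have hNK : #N + K ≤ m + 1 :=
    (Nat.add_le_add_right (card_le_card (filter_subset_filter _ (subset_univ H0))) K).trans
      (card_add_numRejSU_update_zero_le hτ hτ0 q hi₀)
  calc ∑ i ∈ N, c i (numRejSU m τ (update q i 0)) / numRejSU m τ (update q i 0)
      = (∑ i ∈ N, c i K) / K := by
        rw [sum_div]
        refine sum_congr rfl fun i hi => ?_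
        rw [numRejSU_update_zero_eq_of_lt hτ hτ0 q (mem_filter.1 hi).2 hi₀]
    _ ≤ α * K / K := by
        gcongr
        exact hc K (by exact_mod_cast hK1) (numRejSU_le _) N hNK
    _ = α := by field_simp

end StepUp

lemma ite_mem_eq_sum_indicator {Ω α : Type*} {X : Ω → α} {K : Ω → ℕ} {s : Finset ℕ}
    (hKs : ∀ ω, K ω ∈ s) (B : ℕ → Set α) (c : ℕ → ℝ)
    [∀ ω, Decidable (X ω ∈ B (K ω))] (ω : Ω) :
    (if X ω ∈ B (K ω) then c (K ω) else 0) =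
      ∑ k ∈ s, (K ⁻¹' {k} ∩ X ⁻¹' B k).indicator (fun _ => c k) ω := by
  rw [sum_eq_single_of_mem _ (hKs ω) fun k _ hk => Set.indicator_of_notMem
    (fun hω => hk (hω.1 : K ω = k).symm) _]
  by_cases h : X ω ∈ B (K ω)
  · rw [if_pos h, Set.indicator_of_mem (show ω ∈ K ⁻¹' {K ω} ∩ X ⁻¹' B (K ω) from ⟨rfl, h⟩)]
  · rw [if_neg h, Set.indicator_of_notMem fun hω => h hω.2]

section Probability

variable {Ω : Type*} [MeasurableSpace Ω] {P : Measure Ω}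

lemma ProbabilityTheory.iIndepFun.indepFun_comp_update {ι β γ : Type*} [Fintype ι]
    [DecidableEq ι] [MeasurableSpace β] [MeasurableSpace γ] {p : ι → Ω → β}
    (hindep : iIndepFun p P) (hmeas : ∀ i, Measurable (p i)) (i : ι) (b : β)
    {G : (ι → β) → γ} (hG : Measurable G) :
    IndepFun (p i) (fun ω => G (update (fun j => p j ω) i b)) P := by
  have hST := hindep.indepFun_finset {i} {i}ᶜ disjoint_compl_right hmeas
  let glue : (({i}ᶜ : Finset ι) → β) → ι → β := fun x j =>
    if h : j = i then b else x ⟨j, by simpa using h⟩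
  have hglue : Measurable glue := measurable_pi_lambda _ fun j => by
    by_cases h : j = i
    · simp [glue, h]
    · simpa [glue, h] using measurable_pi_apply _
  convert hST.comp (measurable_pi_apply ⟨i, mem_singleton_self i⟩) (hG.comp hglue) using 1
  · rfl
  funext ω
  refine congrArg G (funext fun j => ?_)
  by_cases h : j = i
  · subst h; simp [glue]
  · simp [glue, h]

lemma measureReal_Iic_le_measureReal_Ioi_mul [IsProbabilityMeasure P] {X : Ω → ℝ}
    (hX : Measurable X) {s t a b : ℝ} (hs : P (X ⁻¹' Set.Iic s) ≤ ENNReal.ofReal a)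
    (ht : P (X ⁻¹' Set.Iic t) ≤ ENNReal.ofReal b) (ha : 0 ≤ a) (hb0 : 0 ≤ b) (hb : b < 1) :
    P.real (X ⁻¹' Set.Iic s) ≤ P.real (X ⁻¹' Set.Ioi t) * (a / (1 - b)) := by
  have hs' : P.real (X ⁻¹' Set.Iic s) ≤ a := ENNReal.toReal_le_of_le_ofReal ha hs
  have ht' : P.real (X ⁻¹' Set.Iic t) ≤ b := ENNReal.toReal_le_of_le_ofReal hb0 ht
  have hIoi : P.real (X ⁻¹' Set.Ioi t) = 1 - P.real (X ⁻¹' Set.Iic t) := by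
    rw [← Set.compl_Iic, Set.preimage_compl, probReal_compl_eq_one_sub (hX measurableSet_Iic)]
  calc P.real (X ⁻¹' Set.Iic s) ≤ (1 - b) * (a / (1 - b)) := by
        rwa [mul_div_cancel₀ _ (sub_ne_zero.2 hb.ne')]
    _ ≤ P.real (X ⁻¹' Set.Ioi t) * (a / (1 - b)) := by
        exact mul_le_mul_of_nonneg_right (by linarith) (div_nonneg ha (sub_nonneg.2 hb.le))

lemma integral_le_of_le_sum_of_integral_le [IsProbabilityMeasure P] {ι : Type*} {s : Finset ι}
    {f : Ω → ℝ} {φ ψ : ι → Ω → ℝ} {c : ℝ} (hf : ∀ ω, 0 ≤ f ω)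
    (hφ : ∀ i ∈ s, Integrable (φ i) P) (hψ : ∀ i ∈ s, Integrable (ψ i) P)
    (hfφ : ∀ ω, f ω ≤ ∑ i ∈ s, φ i ω) (hφψ : ∀ i ∈ s, ∫ ω, φ i ω ∂P ≤ ∫ ω, ψ i ω ∂P)
    (hψc : ∀ ω, ∑ i ∈ s, ψ i ω ≤ c) :
    ∫ ω, f ω ∂P ≤ c :=
  calc ∫ ω, f ω ∂P ≤ ∫ ω, ∑ i ∈ s, φ i ω ∂P :=
        integral_mono_of_nonneg (ae_of_all _ hf) (integrable_finsetSum _ hφ) (ae_of_all _ hfφ)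
    _ = ∑ i ∈ s, ∫ ω, φ i ω ∂P := integral_finsetSum _ hφ
    _ ≤ ∑ i ∈ s, ∫ ω, ψ i ω ∂P := sum_le_sum hφψ
    _ = ∫ ω, ∑ i ∈ s, ψ i ω ∂P := (integral_finsetSum _ hψ).symm
    _ ≤ ∫ _, c ∂P := integral_mono (integrable_finsetSum _ hψ) (integrable_const c) hψc
    _ = c := by simp

variable [IsFiniteMeasure P] {α : Type*} [MeasurableSpace α] {X : Ω → α} {K : Ω → ℕ}
  {s : Finset ℕ}

lemma integrable_ite_mem (hX : Measurable X) (hK : Measurable K) (hKs : ∀ ω, K ω ∈ s)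
    {B : ℕ → Set α} (hB : ∀ k, MeasurableSet (B k)) (c : ℕ → ℝ)
    [∀ ω, Decidable (X ω ∈ B (K ω))] :
    Integrable (fun ω => if X ω ∈ B (K ω) then c (K ω) else 0) P := by
  simp_rw [ite_mem_eq_sum_indicator hKs B c]
  exact integrable_finsetSum _ fun k _ =>
    (integrable_const _).indicator ((hK (measurableSet_singleton k)).inter (hX (hB k)))

lemma ProbabilityTheory.IndepFun.integral_ite_mem (hXK : IndepFun X K P) (hX : Measurable X)
    (hK : Measurable K) (hKs : ∀ ω, K ω ∈ s) {B : ℕ → Set α} (hB : ∀ k, MeasurableSet (B k))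
    (c : ℕ → ℝ) [∀ ω, Decidable (X ω ∈ B (K ω))] :
    ∫ ω, (if X ω ∈ B (K ω) then c (K ω) else 0) ∂P =
      ∑ k ∈ s, P.real (X ⁻¹' B k) * c k * P.real (K ⁻¹' {k}) := by
  have hmeas : ∀ k, MeasurableSet (K ⁻¹' {k} ∩ X ⁻¹' B k) :=
    fun k => (hK (measurableSet_singleton k)).inter (hX (hB k))
  simp_rw [ite_mem_eq_sum_indicator hKs B c]
  rw [integral_finsetSum _ fun k _ => (integrable_const _).indicator (hmeas k)]
  refine sum_congr rfl fun k _ => ?_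
  rw [integral_indicator_const _ (hmeas k), smul_eq_mul, Set.inter_comm, measureReal_def,
    hXK.measure_inter_preimage_eq_mul _ _ (hB k) (measurableSet_singleton k),
    ENNReal.toReal_mul, ← measureReal_def, ← measureReal_def]
  ring

lemma ProbabilityTheory.IndepFun.integral_ite_mem_le (hXK : IndepFun X K P) (hX : Measurable X)
    (hK : Measurable K) (hKs : ∀ ω, K ω ∈ s) {B B' : ℕ → Set α} (hB : ∀ k, MeasurableSet (B k))
    (hB' : ∀ k, MeasurableSet (B' k)) {c c' : ℕ → ℝ}
    (hle : ∀ k ∈ s, P.real (X ⁻¹' B k) * c k ≤ P.real (X ⁻¹' B' k) * c' k)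
    [∀ ω, Decidable (X ω ∈ B (K ω))] [∀ ω, Decidable (X ω ∈ B' (K ω))] :
    ∫ ω, (if X ω ∈ B (K ω) then c (K ω) else 0) ∂P ≤
      ∫ ω, (if X ω ∈ B' (K ω) then c' (K ω) else 0) ∂P := by
  rw [hXK.integral_ite_mem hX hK hKs hB, hXK.integral_ite_mem hX hK hKs hB']
  exact sum_le_sum fun k hk => mul_le_mul_of_nonneg_right (hle k hk) measureReal_nonneg

end Probability

lemma ProbabilityTheory.IndepFun.integral_ite_le_le_integral_ite_lt {Ω : Type*}
    [MeasurableSpace Ω] {P : Measure Ω} [IsProbabilityMeasure P] {X : Ω → ℝ} {K : Ω → ℕ} {m : ℕ}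
    (hXK : IndepFun X K P) (hX : Measurable X) (hK : Measurable K) (hKm : ∀ ω, K ω ≤ m)
    {τ G : ℕ → ℝ} (hXG : ∀ k ≤ m, P (X ⁻¹' Set.Iic (τ k)) ≤ ENNReal.ofReal (G k))
    (hG : ∀ k ≤ m, 0 ≤ G k) (hGm : G m < 1) :
    ∫ ω, (if X ω ∈ Set.Iic (τ (K ω)) then (K ω : ℝ)⁻¹ else 0) ∂P ≤
      ∫ ω, (if X ω ∈ Set.Ioi (τ m) then G (K ω) / (1 - G m) / K ω else 0) ∂P := by
  refine hXK.integral_ite_mem_le hX hK (s := range (m + 1))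
    (fun ω => mem_range_succ_iff.2 (hKm ω)) (fun k => measurableSet_Iic (a := τ k))
    (fun _ => measurableSet_Ioi (a := τ m)) (c := fun k => (k : ℝ)⁻¹)
    (c' := fun k => G k / (1 - G m) / k) fun k hk => ?_
  have hkm := mem_range_succ_iff.1 hk
  rw [div_eq_mul_inv _ (k : ℝ), ← mul_assoc]
  exact mul_le_mul_of_nonneg_right (measureReal_Iic_le_measureReal_Ioi_mul hX (hXG k hkm)
    (hXG m le_rfl) (hG k hkm) (hG m le_rfl) hGm) (by positivity)

structure IsADBHCriticalValues (m : ℕ) (A : Finset ℝ) (F : Fin m → ℝ → ℝ) (α : ℝ) (τ : ℕ → ℝ) :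
    Prop where
  zero : τ 0 = 0
  last : IsGreatest {t : ℝ | t ∈ A ∧ (∀ i, F i t < 1) ∧
    (1 / (m : ℝ)) * ∑ i : Fin m, F i t / (1 - F i t) ≤ α} (τ m)
  lt_last : ∀ k, 1 ≤ k → k < m → IsGreatest {t : ℝ | t ∈ A ∧ t ≤ τ m ∧
    ∀ S : Finset (Fin m), S.card = m - k + 1 → ∑ i ∈ S, F i t / (1 - F i (τ m)) ≤ α * k} (τ k)

namespace IsADBHCriticalValues

variable {m : ℕ} {A : Finset ℝ} {F : Fin m → ℝ → ℝ} {α : ℝ} {τ : ℕ → ℝ}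

lemma mem_Icc (hτ : IsADBHCriticalValues m A F α τ) (hA : ∀ t ∈ A, t ∈ Set.Icc (0 : ℝ) 1)
    {k : ℕ} (hk : k ≤ m) : τ k ∈ Set.Icc (0 : ℝ) 1 := by
  rcases Nat.eq_zero_or_pos k with rfl | hk1
  · simp [hτ.zero]
  rcases hk.eq_or_lt with rfl | hlt
  · exact hA _ hτ.last.1.1
  · exact hA _ (hτ.lt_last k hk1 hlt).1.1

lemma sum_div_le (hτ : IsADBHCriticalValues m A F α τ) (hA : ∀ t ∈ A, t ∈ Set.Icc (0 : ℝ) 1)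
    (hF : ∀ i, ∀ t ∈ Set.Icc (0 : ℝ) 1, F i t ∈ Set.Icc (0 : ℝ) 1) {k : ℕ} (hk1 : 1 ≤ k)
    (hkm : k ≤ m) {N : Finset (Fin m)} (hN : #N + k ≤ m + 1) :
    ∑ i ∈ N, F i (τ k) / (1 - F i (τ m)) ≤ α * k := by
  have hnonneg : ∀ i ∈ univ, i ∉ N → 0 ≤ F i (τ k) / (1 - F i (τ m)) := fun i _ _ =>
    div_nonneg (hF i _ (hτ.mem_Icc hA hkm)).1 (sub_pos.2 (hτ.last.1.2.1 i)).le
  rcases hkm.eq_or_lt with rfl | hlt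
  · have hk0 : (k : ℝ) ≠ 0 := by positivity
    calc ∑ i ∈ N, F i (τ k) / (1 - F i (τ k))
        ≤ ∑ i, F i (τ k) / (1 - F i (τ k)) :=
          sum_le_sum_of_subset_of_nonneg (subset_univ N) hnonneg
      _ = k * (1 / (k : ℝ) * ∑ i, F i (τ k) / (1 - F i (τ k))) := by field_simp
      _ ≤ k * α := mul_le_mul_of_nonneg_left hτ.last.1.2.2 (Nat.cast_nonneg k)
      _ = α * k := mul_comm _ _
  · obtain ⟨S, hNS, hS⟩ := exists_superset_card_eq (n := m - k + 1) (s := N) (by omega)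
      (by simp; omega)
    exact (sum_le_sum_of_subset_of_nonneg hNS fun i _ => hnonneg i (mem_univ i)).trans
      ((hτ.lt_last k hk1 hlt).1.2.2 S hS)

lemma monotoneOn (hτ : IsADBHCriticalValues m A F α τ) (hA : ∀ t ∈ A, t ∈ Set.Icc (0 : ℝ) 1)
    (hF : ∀ i, ∀ t ∈ Set.Icc (0 : ℝ) 1, F i t ∈ Set.Icc (0 : ℝ) 1) (hα : 0 ≤ α) :
    MonotoneOn τ (Set.Iic m) := by
  intro k hk l hl hkl
  rw [Set.mem_Iic] at hk hl
  rcases Nat.eq_zero_or_pos k with rfl | hk1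
  · exact hτ.zero ▸ (hτ.mem_Icc hA hl).1
  rcases hl.eq_or_lt with rfl | hlt
  · rcases hk.eq_or_lt with rfl | hkl'
    · exact le_rfl
    · exact (hτ.lt_last k hk1 hkl').1.2.1
  have hklt : k < m := hkl.trans_lt hlt
  refine (hτ.lt_last l (hk1.trans_le hkl) hlt).2
    ⟨(hτ.lt_last k hk1 hklt).1.1, (hτ.lt_last k hk1 hklt).1.2.1, fun S hS => ?_⟩
  calc ∑ i ∈ S, F i (τ k) / (1 - F i (τ m)) ≤ α * k := hτ.sum_div_le hA hF hk1 hk (by omega)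
    _ ≤ α * l := by gcongr

end IsADBHCriticalValues

theorem fdr_A_DBH_SU_le_alpha_general
    {Ω : Type*} [MeasurableSpace Ω] (P : Measure Ω) [IsProbabilityMeasure P]
    (m : ℕ)
    (p : Fin m → Ω → ℝ) (hmeas : ∀ i, Measurable (p i))
    (hindep : iIndepFun p P)
    (H0 : Finset (Fin m))
    (F : Fin m → ℝ → ℝ)
    (hFrange : ∀ i, ∀ t ∈ Set.Icc (0 : ℝ) 1, F i t ∈ Set.Icc (0 : ℝ) 1)
    (hnull : ∀ i ∈ H0, ∀ t ∈ Set.Icc (0 : ℝ) 1,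
      P {ω | p i ω ≤ t} ≤ ENNReal.ofReal (F i t))
    (A : Finset ℝ) (hA : ∀ t ∈ A, t ∈ Set.Icc (0 : ℝ) 1)
    (α : ℝ) (hα : α ∈ Set.Ioo (0 : ℝ) 1)
    (τ : ℕ → ℝ) (hτ0 : τ 0 = 0)
    (hτm : IsGreatest {t : ℝ | t ∈ A ∧ (∀ i, F i t < 1) ∧
      (1 / (m : ℝ)) * ∑ i : Fin m, F i t / (1 - F i t) ≤ α} (τ m))
    (hτk : ∀ k, 1 ≤ k → k < m → IsGreatest {t : ℝ | t ∈ A ∧ t ≤ τ m ∧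
      ∀ S : Finset (Fin m), S.card = m - k + 1 →
        ∑ i ∈ S, F i t / (1 - F i (τ m)) ≤ α * k} (τ k))
    :
    ∫ ω, FDP m H0 (rejSU m τ (fun j => p j ω)) ∂P ≤ α := by
  have hτ : IsADBHCriticalValues m A F α τ := ⟨hτ0, hτm, hτk⟩
  have hmono := hτ.monotoneOn hA hFrange hα.1.le
  set κ : Fin m → Ω → ℕ := fun i ω => numRejSU m τ (update (fun j => p j ω) i 0)
  have hκ : ∀ i, Measurable (κ i) := fun i =>
    measurable_numRejSU.comp (measurable_update_left.comp (measurable_pi_lambda _ hmeas))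
  have hκm : ∀ i ω, κ i ω ∈ range (m + 1) := fun i ω => mem_range_succ_iff.2 (numRejSU_le _)
  refine integral_le_of_le_sum_of_integral_le
    (φ := fun i ω => if p i ω ∈ Set.Iic (τ (κ i ω)) then (κ i ω : ℝ)⁻¹ else 0)
    (ψ := fun i ω => if p i ω ∈ Set.Ioi (τ m) then F i (τ (κ i ω)) / (1 - F i (τ m)) / κ i ω
      else 0)
    (fun _ => FDP_nonneg _ _)
    (fun i _ => integrable_ite_mem (hmeas i) (hκ i) (hκm i)
      (fun k => measurableSet_Iic (a := τ k)) (fun k => (k : ℝ)⁻¹))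
    (fun i _ => integrable_ite_mem (hmeas i) (hκ i) (hκm i) (fun _ => measurableSet_Ioi)
      (fun k => F i (τ k) / (1 - F i (τ m)) / k))
    (fun _ => FDP_rejSU_le_sum hmono hτ0.ge H0 _)
    (fun i hi => ?_)
    (fun _ => sum_ite_lt_div_numRejSU_update_zero_le hmono hτ0.ge hα.1.le
      (fun k hk1 hkm N hN => hτ.sum_div_le hA hFrange hk1 hkm hN) H0 _)
  exact (hindep.indepFun_comp_update hmeas i 0 measurable_numRejSU
    ).integral_ite_le_le_integral_ite_lt (hmeas i) (hκ i) (fun _ => numRejSU_le _)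
    (fun k hk => hnull i hi _ (hτ.mem_Icc hA hk))
    (fun k hk => (hFrange i _ (hτ.mem_Icc hA hk)).1) (hτm.1.2.1 i)

/-- the adaptive [A-DBH-SU] procedure controls the FDR at level `α`. -/
theorem fdr_A_DBH_SU_le_alpha
    {Ω : Type*} [MeasurableSpace Ω] (P : Measure Ω) [IsProbabilityMeasure P]
    (m : ℕ) (hm : 1 ≤ m)
    (p : Fin m → Ω → ℝ) (hmeas : ∀ i, Measurable (p i))
    (hp01 : ∀ i ω, p i ω ∈ Set.Icc (0 : ℝ) 1)
    (hindep : iIndepFun p P)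
    (H0 : Finset (Fin m))
    (F : Fin m → ℝ → ℝ)
    (hFmono : ∀ i, MonotoneOn (F i) (Set.Icc 0 1))
    (hFrange : ∀ i, ∀ t ∈ Set.Icc (0 : ℝ) 1, F i t ∈ Set.Icc (0 : ℝ) 1)
    (hF0 : ∀ i, F i 0 = 0) (hF1 : ∀ i, F i 1 = 1)
    (hnull : ∀ i ∈ H0, ∀ t ∈ Set.Icc (0 : ℝ) 1,
      P {ω | p i ω ≤ t} ≤ ENNReal.ofReal (F i t))
    (A : Finset ℝ) (hA0 : (0 : ℝ) ∈ A) (hA : ∀ t ∈ A, t ∈ Set.Icc (0 : ℝ) 1)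
    (hpA : ∀ i, ∀ᵐ ω ∂P, p i ω ∈ A)
    (α : ℝ) (hα : α ∈ Set.Ioo (0 : ℝ) 1)
    (τ : ℕ → ℝ) (hτ0 : τ 0 = 0)
    (hτm : IsGreatest {t : ℝ | t ∈ A ∧ (∀ i, F i t < 1) ∧
      (1 / (m : ℝ)) * ∑ i : Fin m, F i t / (1 - F i t) ≤ α} (τ m))
    (hτk : ∀ k, 1 ≤ k → k < m → IsGreatest {t : ℝ | t ∈ A ∧ t ≤ τ m ∧
      ∀ S : Finset (Fin m), S.card = m - k + 1 →
        ∑ i ∈ S, F i t / (1 - F i (τ m)) ≤ α * k} (τ k))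
    :
    ∫ ω, FDP m H0 (rejSU m τ (fun j => p j ω)) ∂P ≤ α :=
  fdr_A_DBH_SU_le_alpha_general P m p hmeas hindep H0 F hFrange hnull A hA α hα τ hτ0 hτm hτk
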